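/- arXiv:2109.13794 — 3 statements merged into one kernel-verified Lean document; each statement's English description precedes it below -/
import Mathlib

section
/- For every modulus κ with 0 < κ < 1, the complete integral K = ∫₀^{π/2} F(1/4, 3/4; 1/2; κ² sin² t) dt satisfies K = (π/2) · F(1/4, 3/4; 1; κ²). -/
open Real

/-- The Gauss hypergeometric series `F(a, b; c; x)` with real parameters. -/
noncomputable def hyperF (a b c x : ℝ) : ℝ :=
  ∑' n : ℕ, (Polynomial.eval a (ascPochhammer ℝ n) * Polynomial.eval b (ascPochhammer ℝ n) /
      (Polynomial.eval c (ascPochhammer ℝ n) * (Nat.factorial n : ℝ))) * x ^ n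

/-- `G κ T = ∫₀^T F(1/4, 3/4; 1/2; κ² sin² t) dt`. -/
noncomputable def G (κ T : ℝ) : ℝ :=
  ∫ t in (0:ℝ)..T, hyperF (1/4) (3/4) (1/2) (κ ^ 2 * Real.sin t ^ 2)

/-- The complete integral `K = G κ (π/2)`. -/
noncomputable def K (κ : ℝ) : ℝ := G κ (Real.pi / 2)

/-- The auxiliary function `ψ = arcsin (κ sin φ)`. -/
noncomputable def psi (κ : ℝ) (φ : ℝ → ℝ) (u : ℝ) : ℝ :=
  Real.arcsin (κ * Real.sin (φ u))

/-- The root function `rn = sin (ψ/2)`. -/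
noncomputable def rn (κ : ℝ) (φ : ℝ → ℝ) (u : ℝ) : ℝ :=
  Real.sin (psi κ φ u / 2)

/-!
Expand the integrand in powers of `κ² sin² t` and integrate term by term (the coefficients
of `F(1/4, 3/4; 1/2; ·)` lie in `[0, 1]`, so the geometric series in `κ²` dominates). By
Wallis, `∫₀^{π/2} sin^{2n} t dt = (π/2) (1/2)ₙ / n!`, and the factor `(1/2)ₙ / n!` turns the
coefficient `(a)ₙ (b)ₙ / ((1/2)ₙ n!)` into `(a)ₙ (b)ₙ / ((1)ₙ n!)`.
-/

open Polynomial MeasureTheory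

noncomputable def hyperCoeff (a b c : ℝ) (n : ℕ) : ℝ :=
  (ascPochhammer ℝ n).eval a * (ascPochhammer ℝ n).eval b /
    ((ascPochhammer ℝ n).eval c * (n.factorial : ℝ))

theorem hyperF_eq_tsum (a b c x : ℝ) : hyperF a b c x = ∑' n, hyperCoeff a b c n * x ^ n := rfl

theorem ascPochhammer_eval_le_eval {x y : ℝ} (hx : 0 < x) (hxy : x ≤ y) (n : ℕ) :
    (ascPochhammer ℝ n).eval x ≤ (ascPochhammer ℝ n).eval y := by
  induction n with
  | zero => simp
  | succ n ih =>
    rw [ascPochhammer_succ_eval, ascPochhammer_succ_eval]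
    exact mul_le_mul ih (by linarith) (by positivity) (ascPochhammer_pos n y (hx.trans_le hxy)).le

theorem hyperCoeff_nonneg {a b c : ℝ} (ha : 0 < a) (hb : 0 < b) (hc : 0 < c) (n : ℕ) :
    0 ≤ hyperCoeff a b c n := by
  have := ascPochhammer_pos n a ha
  have := ascPochhammer_pos n b hb
  have := ascPochhammer_pos n c hc
  unfold hyperCoeff
  positivity

theorem hyperCoeff_le_one {a b c : ℝ} (ha : 0 < a) (hac : a ≤ c) (hb : 0 < b) (hb₁ : b ≤ 1)
    (n : ℕ) : hyperCoeff a b c n ≤ 1 := by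
  have hc := ascPochhammer_pos n c (ha.trans_le hac)
  rw [hyperCoeff, div_le_one (by positivity)]
  have hb' : (ascPochhammer ℝ n).eval b ≤ n.factorial := by
    simpa [ascPochhammer_eval_one] using ascPochhammer_eval_le_eval hb hb₁ n
  exact mul_le_mul (ascPochhammer_eval_le_eval ha hac n) hb'
    (ascPochhammer_pos n b hb).le hc.le

theorem hyperCoeff_half_mul (a b : ℝ) (n : ℕ) :
    hyperCoeff a b (1 / 2) n * ((ascPochhammer ℝ n).eval (1 / 2) / n.factorial) =
      hyperCoeff a b 1 n := by
  have := (ascPochhammer_pos n (1 / 2 : ℝ) (by norm_num)).ne'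
  have : (n.factorial : ℝ) ≠ 0 := by positivity
  rw [hyperCoeff, hyperCoeff, ascPochhammer_eval_one]
  field_simp

theorem integral_sin_pow_even_zero_pi_div_two (n : ℕ) :
    ∫ t in (0 : ℝ)..π / 2, sin t ^ (2 * n) =
      π / 2 * ((ascPochhammer ℝ n).eval (1 / 2) / n.factorial) := by
  induction n with
  | zero => simp
  | succ n ih =>
    have : (n.factorial : ℝ) ≠ 0 := by positivity
    rw [Nat.mul_succ, integral_sin_pow, sin_zero, cos_pi_div_two, zero_pow (Nat.succ_ne_zero _),
      zero_mul, mul_zero, sub_self, zero_div, zero_add, ih, ascPochhammer_succ_eval,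
      Nat.factorial_succ]
    push_cast
    field_simp
    ring

theorem integral_tsum_mul_sin_sq_pow {c : ℕ → ℝ} {x : ℝ}
    (hc : Summable fun n => |c n| * |x| ^ n) :
    ∫ t in (0 : ℝ)..π / 2, ∑' n, c n * (x * sin t ^ 2) ^ n =
      π / 2 * ∑' n, c n * ((ascPochhammer ℝ n).eval (1 / 2) / n.factorial) * x ^ n := by
  have hbound (n : ℕ) (t : ℝ) : ‖c n * (x * sin t ^ 2) ^ n‖ ≤ |c n| * |x| ^ n := by
    have : |x * sin t ^ 2| ≤ |x| := by
      rw [abs_mul, abs_of_nonneg (sq_nonneg (sin t))]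
      exact mul_le_of_le_one_right (abs_nonneg x) (sin_sq_le_one t)
    rw [norm_mul, norm_pow, Real.norm_eq_abs, Real.norm_eq_abs]
    gcongr
  have hterm (n : ℕ) : ∫ t in (0 : ℝ)..π / 2, c n * (x * sin t ^ 2) ^ n =
      π / 2 * (c n * ((ascPochhammer ℝ n).eval (1 / 2) / n.factorial) * x ^ n) := by
    simp_rw [mul_pow, ← pow_mul]
    rw [intervalIntegral.integral_const_mul, intervalIntegral.integral_const_mul,
      integral_sin_pow_even_zero_pi_div_two]
    ring
  have hsum := intervalIntegral.hasSum_integral_of_dominated_convergence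
    (μ := volume) (a := 0) (b := π / 2) (f := fun t => ∑' n, c n * (x * sin t ^ 2) ^ n)
    (fun n _ => |c n| * |x| ^ n)
    (fun n => (by fun_prop : Continuous _).aestronglyMeasurable)
    (fun n => .of_forall fun t _ => hbound n t) (.of_forall fun _ _ => hc)
    intervalIntegrable_const
    (.of_forall fun t _ => (Summable.of_norm_bounded hc (hbound · t)).hasSum)
  simp_rw [hterm] at hsum
  rw [← hsum.tsum_eq, tsum_mul_left]

theorem integral_hyperF_half_sin_sq {a b x : ℝ} (ha : 0 < a) (ha₁ : a ≤ 1 / 2) (hb : 0 < b)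
    (hb₁ : b ≤ 1) (hx : |x| < 1) :
    ∫ t in (0 : ℝ)..π / 2, hyperF a b (1 / 2) (x * sin t ^ 2) = π / 2 * hyperF a b 1 x := by
  have hc : Summable fun n => |hyperCoeff a b (1 / 2) n| * |x| ^ n := by
    refine (summable_geometric_of_lt_one (abs_nonneg x) hx).of_nonneg_of_le
      (fun n => by positivity) fun n => ?_
    rw [abs_of_nonneg (hyperCoeff_nonneg ha hb (by norm_num) n)]
    exact mul_le_of_le_one_left (by positivity) (hyperCoeff_le_one ha ha₁ hb hb₁ n)
  simp only [hyperF_eq_tsum, integral_tsum_mul_sin_sq_pow hc, hyperCoeff_half_mul]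

theorem stmt1 (κ : ℝ) (hκ₀ : 0 < κ) (hκ₁ : κ < 1) :
    K κ = Real.pi / 2 * hyperF (1/4) (3/4) 1 (κ ^ 2) := by
  have hκ : |κ ^ 2| < 1 := by
    rw [abs_of_nonneg (by positivity)]
    nlinarith
  exact integral_hyperF_half_sin_sq (by norm_num) (by norm_num) (by norm_num) (by norm_num) hκ
end

section
/- For every modulus κ with 0 < κ < 1, the function rn : ℝ → ℝ is periodic with period 4K, i.e. rn(u + 4K) = rn(u) for all real u; moreover 4K is the least positive period of rn. -/
open Real

/-! The integrand `F(1/4, 3/4; 1/2; κ² sin² t)` is continuous and at least `1`, since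
`κ² sin² t` stays in `[0, κ²]`, inside the unit disc of convergence, where all terms of the series
are nonnegative. It is `π`-periodic and symmetric under `t ↦ π - t`, so `G` is strictly increasing
with `G (T + π) = G T + 2K`. Hence `φ (u + 2K) = φ u + π` and `rn (u + 2K) = -rn u`, which gives
the period `4K`. A positive period `p < 4K` would satisfy `rn p = rn 0 = 0`, forcing `sin (φ p) = 0`
with `0 < φ p < 2π`, so `φ p = π` and `p = 2K`; then `rn K = -rn K`, whereas `φ K = π/2` gives
`rn K = sin (arcsin κ / 2) ≠ 0`. -/

theorem hyperF_eq_ordinaryHypergeometric (a b c x : ℝ) : hyperF a b c x = ₂F₁ a b c x := by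
  rw [ordinaryHypergeometric_eq_tsum, hyperF]
  refine tsum_congr fun n => ?_
  rw [smul_eq_mul, div_eq_mul_inv, mul_inv]
  ring

theorem ordinaryHypergeometricSeries_radius_eq_one_of_pos {a b c : ℝ} (ha : 0 < a) (hb : 0 < b)
    (hc : 0 < c) : (ordinaryHypergeometricSeries ℝ a b c).radius = 1 :=
  ordinaryHypergeometricSeries_radius_eq_one (𝔸 := ℝ) a b c fun k =>
    have hk : (0 : ℝ) ≤ k := k.cast_nonneg
    ⟨by linarith, by linarith, by linarith⟩

theorem continuousOn_ordinaryHypergeometric {a b c : ℝ} (ha : 0 < a) (hb : 0 < b) (hc : 0 < c) :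
    ContinuousOn (₂F₁ a b c : ℝ → ℝ) (Metric.ball 0 1) := by
  have := (ordinaryHypergeometricSeries ℝ a b c).continuousOn
  rw [ordinaryHypergeometricSeries_radius_eq_one_of_pos ha hb hc, ← ENNReal.coe_one,
    Metric.eball_coe, NNReal.coe_one] at this
  exact this

theorem one_le_ordinaryHypergeometric {a b c x : ℝ} (ha : 0 < a) (hb : 0 < b) (hc : 0 < c)
    (hx₀ : 0 ≤ x) (hx₁ : x < 1) : 1 ≤ ₂F₁ a b c x := by
  have hx : x ∈ Metric.eball (0 : ℝ) (ordinaryHypergeometricSeries ℝ a b c).radius := by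
    rw [ordinaryHypergeometricSeries_radius_eq_one_of_pos ha hb hc, ← ENNReal.coe_one,
      Metric.eball_coe, NNReal.coe_one, mem_ball_zero_iff, Real.norm_eq_abs, abs_lt]
    constructor <;> linarith
  have hterm : ∀ n, 0 ≤ ordinaryHypergeometricSeries ℝ a b c n fun _ => x := fun n => by
    rw [ordinaryHypergeometricSeries_apply_eq, smul_eq_mul]
    have := ascPochhammer_pos n a ha
    have := ascPochhammer_pos n b hb
    have := ascPochhammer_pos n c hc
    positivity
  calc (1 : ℝ) = ordinaryHypergeometricSeries ℝ a b c 0 fun _ => x := by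
        rw [ordinaryHypergeometricSeries_apply_eq]; simp
    _ ≤ ₂F₁ a b c x :=
        ((ordinaryHypergeometricSeries ℝ a b c).summable hx).le_tsum 0 fun n _ => hterm n

theorem sin_half_arcsin_eq_zero_iff (x : ℝ) : sin (arcsin x / 2) = 0 ↔ x = 0 := by
  have h := arcsin_mem_Icc x
  rw [sin_eq_zero_iff_of_lt_of_lt (by linarith [h.1, pi_pos]) (by linarith [h.2, pi_pos]),
    div_eq_zero_iff, or_iff_left two_ne_zero, arcsin_eq_zero_iff]

noncomputable def integrandG (κ t : ℝ) : ℝ := hyperF (1/4) (3/4) (1/2) (κ ^ 2 * sin t ^ 2)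

theorem G_eq_integral (κ T : ℝ) : G κ T = ∫ t in (0:ℝ)..T, integrandG κ t := rfl

theorem integrandG_periodic (κ : ℝ) : Function.Periodic (integrandG κ) π := fun t => by
  simp only [integrandG, sin_add_pi, neg_sq]

theorem integrandG_pi_sub (κ t : ℝ) : integrandG κ (π - t) = integrandG κ t := by
  simp only [integrandG, sin_pi_sub]

theorem G_zero (κ : ℝ) : G κ 0 = 0 := intervalIntegral.integral_same

section
variable {κ : ℝ}

theorem sq_mul_sin_sq_mem_Ico (hκ : |κ| < 1) (t : ℝ) : κ ^ 2 * sin t ^ 2 ∈ Set.Ico 0 1 := by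
  have hκ2 : κ ^ 2 < 1 := (sq_lt_one_iff_abs_lt_one κ).2 hκ
  refine ⟨by positivity, ?_⟩
  nlinarith [sin_sq_le_one t, sq_nonneg κ]

theorem continuous_integrandG (hκ : |κ| < 1) : Continuous (integrandG κ) := by
  have hF := continuousOn_ordinaryHypergeometric (a := 1/4) (b := 3/4) (c := 1/2)
    (by norm_num) (by norm_num) (by norm_num)
  refine (hF.comp_continuous (by fun_prop) fun t => ?_).congr fun t =>
    (hyperF_eq_ordinaryHypergeometric ..).symm
  obtain ⟨h₀, h₁⟩ := sq_mul_sin_sq_mem_Ico hκ t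
  rw [mem_ball_zero_iff, Real.norm_eq_abs, abs_of_nonneg h₀]
  exact h₁

theorem intervalIntegrable_integrandG (hκ : |κ| < 1) (a b : ℝ) :
    IntervalIntegrable (integrandG κ) MeasureTheory.volume a b :=
  (continuous_integrandG hκ).intervalIntegrable a b

theorem one_le_integrandG (hκ : |κ| < 1) (t : ℝ) : 1 ≤ integrandG κ t := by
  obtain ⟨h₀, h₁⟩ := sq_mul_sin_sq_mem_Ico hκ t
  rw [integrandG, hyperF_eq_ordinaryHypergeometric]
  exact one_le_ordinaryHypergeometric (by norm_num) (by norm_num) (by norm_num) h₀ h₁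

theorem G_strictMono (hκ : |κ| < 1) : StrictMono (G κ) := fun a b hab => by
  have hint := intervalIntegrable_integrandG hκ
  rw [G_eq_integral, G_eq_integral, ← intervalIntegral.integral_add_adjacent_intervals (hint 0 a)
    (hint a b), lt_add_iff_pos_right]
  exact intervalIntegral.intervalIntegral_pos_of_pos_on (hint a b)
    (fun t _ => one_pos.trans_le (one_le_integrandG hκ t)) hab

theorem K_pos (hκ : |κ| < 1) : 0 < K κ := by
  have := G_strictMono hκ (show (0:ℝ) < π / 2 by positivity)
  rwa [G_zero] at this

theorem G_pi (hκ : |κ| < 1) : G κ π = 2 * K κ := by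
  have hint := intervalIntegrable_integrandG hκ
  have hsymm : ∫ t in (π/2)..π, integrandG κ t = K κ := by
    have := intervalIntegral.integral_comp_sub_left (a := 0) (b := π / 2) (integrandG κ) π
    simp only [integrandG_pi_sub, sub_zero, show π - π / 2 = π / 2 by ring] at this
    exact this.symm
  rw [G_eq_integral, ← intervalIntegral.integral_add_adjacent_intervals (hint 0 (π/2))
    (hint (π/2) π), hsymm, two_mul]
  rfl

theorem G_add_pi (hκ : |κ| < 1) (T : ℝ) : G κ (T + π) = G κ T + 2 * K κ := by
  rw [← G_pi hκ, G_eq_integral, G_eq_integral, G_eq_integral,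
    (integrandG_periodic κ).intervalIntegral_add_eq_add 0 T
      (intervalIntegrable_integrandG hκ), zero_add]

variable {φ : ℝ → ℝ}

theorem phi_add_two_K (hκ : |κ| < 1) (hφ : Function.RightInverse φ (G κ)) (u : ℝ) :
    φ (u + 2 * K κ) = φ u + π :=
  (G_strictMono hκ).injective (by rw [hφ, G_add_pi hκ, hφ])

theorem rn_add_two_K (hκ : |κ| < 1) (hφ : Function.RightInverse φ (G κ)) (u : ℝ) :
    rn κ φ (u + 2 * K κ) = -rn κ φ u := by
  rw [rn, rn, psi, psi, phi_add_two_K hκ hφ, sin_add_pi, mul_neg, arcsin_neg, neg_div, sin_neg]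

theorem rn_zero (hκ : |κ| < 1) (hφ : Function.RightInverse φ (G κ)) : rn κ φ 0 = 0 := by
  have hφ0 : φ 0 = 0 := (G_strictMono hκ).injective (by rw [hφ, G_zero])
  rw [rn, psi, hφ0, sin_zero, mul_zero, arcsin_zero, zero_div, sin_zero]

theorem rn_K_ne_zero (hκ₀ : κ ≠ 0) (hκ : |κ| < 1) (hφ : Function.RightInverse φ (G κ)) :
    rn κ φ (K κ) ≠ 0 := by
  have hφK : φ (K κ) = π / 2 := (G_strictMono hκ).injective (hφ (K κ))
  rwa [rn, psi, hφK, sin_pi_div_two, mul_one, Ne, sin_half_arcsin_eq_zero_iff]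

theorem eq_two_K_of_rn_eq_zero (hκ₀ : κ ≠ 0) (hκ : |κ| < 1)
    (hφ : Function.RightInverse φ (G κ)) {p : ℝ} (hp₀ : 0 < p) (hp : p < 4 * K κ)
    (h : rn κ φ p = 0) : p = 2 * K κ := by
  have hG := G_strictMono hκ
  have hsin : sin (φ p) = 0 := by
    rwa [rn, psi, sin_half_arcsin_eq_zero_iff, mul_eq_zero, or_iff_right hκ₀] at h
  have hlo : 0 < φ p := by rwa [← hG.lt_iff_lt, hφ, G_zero]
  have hhi : φ p < 2 * π := by
    have h2π : G κ (2 * π) = 4 * K κ := by rw [two_mul, G_add_pi hκ, G_pi hκ]; ring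
    rwa [← hG.lt_iff_lt, hφ, h2π]
  have hφπ : φ p = π := by
    have h := (sin_eq_zero_iff_of_lt_of_lt (x := φ p - π) (by linarith) (by linarith)).1
      (by rw [sin_sub_pi, hsin, neg_zero])
    linarith
  rw [← hφ p, hφπ, G_pi hκ]

end

theorem stmt7_general (κ : ℝ) (hκ₀ : 0 < κ) (hκ₁ : κ < 1)
    (φ : ℝ → ℝ) (hφ₂ : Function.RightInverse φ (G κ)) :
    (∀ u : ℝ, rn κ φ (u + 4 * K κ) = rn κ φ u) ∧
      IsLeast {p : ℝ | 0 < p ∧ ∀ u : ℝ, rn κ φ (u + p) = rn κ φ u} (4 * K κ) := by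
  have hκ : |κ| < 1 := abs_lt.2 ⟨by linarith, hκ₁⟩
  have hper (u : ℝ) : rn κ φ (u + 4 * K κ) = rn κ φ u := by
    rw [show u + 4 * K κ = u + 2 * K κ + 2 * K κ by ring, rn_add_two_K hκ hφ₂,
      rn_add_two_K hκ hφ₂, neg_neg]
  refine ⟨hper, ⟨by linarith [K_pos hκ], hper⟩, fun p ⟨hp₀, hp⟩ => ?_⟩
  by_contra! hlt
  have h2K := eq_two_K_of_rn_eq_zero hκ₀.ne' hκ hφ₂ hp₀ hlt (by
    rw [← zero_add p, hp, rn_zero hκ hφ₂])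
  have hK := hp (K κ)
  rw [h2K, rn_add_two_K hκ hφ₂, neg_eq_iff_add_eq_zero, ← two_mul, mul_eq_zero] at hK
  exact rn_K_ne_zero hκ₀.ne' hκ hφ₂ (hK.resolve_left two_ne_zero)

theorem stmt7 (κ : ℝ) (hκ₀ : 0 < κ) (hκ₁ : κ < 1)
    (φ : ℝ → ℝ) (hφ₁ : Function.LeftInverse φ (G κ))
    (hφ₂ : Function.RightInverse φ (G κ)) :
    (∀ u : ℝ, rn κ φ (u + 4 * K κ) = rn κ φ u) ∧
      IsLeast {p : ℝ | 0 < p ∧ ∀ u : ℝ, rn κ φ (u + p) = rn κ φ u} (4 * K κ) :=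
  stmt7_general κ hκ₀ hκ₁ φ hφ₂
end

section
/- For every modulus κ with 0 < κ < 1, the function φ : ℝ → ℝ is differentiable and its derivative satisfies φ'(u) = cos(ψ(u)) / cos(ψ(u)/2) for all real u. -/
open Real

/-! By the duplication formulas `(1/2)_{2n} = 4ⁿ (1/4)_n (3/4)_n` and `(2n)! = 4ⁿ (1/2)_n n!`,
the series `F(1/4, 3/4; 1/2; z²)` is the even part of the binomial series of `(1 - z)^(-1/2)`,
so it equals `((1 - z)^(-1/2) + (1 + z)^(-1/2)) / 2 = cos (arcsin z / 2) / cos (arcsin z)`.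
Hence `G κ` has the continuous positive derivative `cos (θ / 2) / cos θ` at `T`, where
`θ = arcsin (κ sin T)`; at `T = φ u` this `θ` is `ψ u`, so `φ' = cos ψ / cos (ψ / 2)`. -/

open Polynomial

theorem ascPochhammer_eval_two_mul {K : Type*} [Field K] [CharZero K] (x : K) (n : ℕ) :
    (ascPochhammer K (2 * n)).eval (2 * x) =
      4 ^ n * (ascPochhammer K n).eval x * (ascPochhammer K n).eval (x + 1 / 2) := by
  induction n with
  | zero => simp
  | succ n ih =>
    rw [show 2 * (n + 1) = 2 * n + 1 + 1 by ring, ascPochhammer_succ_eval,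
      ascPochhammer_succ_eval, ascPochhammer_succ_eval, ascPochhammer_succ_eval, ih]
    push_cast
    field_simp
    ring

theorem Ring.choose_add_sub_one_eq_ascPochhammer_div {a : ℝ} (n : ℕ) :
    Ring.choose (a + n - 1) n = (ascPochhammer ℝ n).eval a / n.factorial := by
  rw [Ring.choose_eq_smul, descPochhammer_smeval_eq_ascPochhammer,
    ascPochhammer_smeval_eq_eval, smul_eq_mul, inv_mul_eq_div]
  ring_nf

theorem hasSum_inv_sqrt_one_sub {x : ℝ} (hx : |x| < 1) :
    HasSum (fun n : ℕ => (ascPochhammer ℝ n).eval (1/2) / n.factorial * x ^ n) (√(1 - x))⁻¹ := by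
  have hx' : x ∈ Metric.eball (0 : ℝ) 1 := by
    rwa [Metric.mem_eball, edist_zero_right, enorm_eq_nnnorm, ENNReal.coe_lt_one_iff,
      ← NNReal.coe_lt_one, coe_nnnorm, norm_eq_abs]
  have := (one_div_one_sub_rpow_hasFPowerSeriesOnBall_zero (1/2)).hasSum hx'
  simp only [FormalMultilinearSeries.ofScalars_apply_eq, zero_add, smul_eq_mul,
    Ring.choose_add_sub_one_eq_ascPochhammer_div] at this
  rwa [sqrt_eq_rpow, ← one_div]

theorem HasSum.even_part {K : Type*} [Field K] [CharZero K] [TopologicalSpace K]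
    [IsTopologicalRing K] {a : ℕ → K} {x s t : K}
    (hs : HasSum (fun n => a n * x ^ n) s) (ht : HasSum (fun n => a n * (-x) ^ n) t) :
    HasSum (fun n => a (2 * n) * (x ^ 2) ^ n) ((s + t) / 2) := by
  have hsum := (hs.add ht).div_const 2
  have hodd : ∀ k ∉ Set.range (2 * ·), (a k * x ^ k + a k * (-x) ^ k) / 2 = 0 := by
    intro k hk
    have : Odd k := Nat.not_even_iff_odd.mp fun ⟨m, hm⟩ => hk ⟨m, by dsimp only; omega⟩
    rw [this.neg_pow]
    ring
  convert (Function.Injective.hasSum_iff (fun _ _ h => by omega) hodd).mpr hsum using 2 with n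
  simp only [Function.comp_apply, pow_mul, neg_sq]
  field_simp
  ring

theorem hyperF_coeff_quarter_threeQuarter_half (n : ℕ) :
    (ascPochhammer ℝ n).eval (1/4) * (ascPochhammer ℝ n).eval (3/4) /
        ((ascPochhammer ℝ n).eval (1/2) * n.factorial) =
      (ascPochhammer ℝ (2 * n)).eval (1/2) / (2 * n).factorial := by
  have h₁ := ascPochhammer_eval_two_mul (1/4 : ℝ) n
  have h₂ := ascPochhammer_eval_two_mul (1/2 : ℝ) n
  norm_num [ascPochhammer_eval_one] at h₁ h₂
  have : (ascPochhammer ℝ n).eval (1/2) ≠ 0 := (ascPochhammer_pos n _ (by norm_num)).ne'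
  rw [h₁, h₂]
  field_simp

theorem hyperF_quarter_threeQuarter_half_sq {z : ℝ} (hz : |z| < 1) :
    hyperF (1/4) (3/4) (1/2) (z ^ 2) = ((√(1 - z))⁻¹ + (√(1 + z))⁻¹) / 2 := by
  have h := (hasSum_inv_sqrt_one_sub hz).even_part
    (hasSum_inv_sqrt_one_sub (x := -z) (by rwa [abs_neg]))
  rw [sub_neg_eq_add] at h
  simp only [hyperF, hyperF_coeff_quarter_threeQuarter_half, h.tsum_eq]

theorem inv_sqrt_one_sub_add_inv_sqrt_one_add {z : ℝ} (hz : |z| < 1) :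
    ((√(1 - z))⁻¹ + (√(1 + z))⁻¹) / 2 = cos (arcsin z / 2) / cos (arcsin z) := by
  obtain ⟨hz₁, hz₂⟩ := abs_lt.mp hz
  have ha : 0 < √(1 - z) := sqrt_pos.mpr (by linarith)
  have hb : 0 < √(1 + z) := sqrt_pos.mpr (by linarith)
  have ha2 : √(1 - z) ^ 2 = 1 - z := sq_sqrt (by linarith)
  have hb2 : √(1 + z) ^ 2 = 1 + z := sq_sqrt (by linarith)
  have hcos : cos (arcsin z) = √(1 - z) * √(1 + z) := by
    rw [cos_arcsin, show 1 - z ^ 2 = (1 - z) * (1 + z) by ring, sqrt_mul (by linarith)]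
  have hcos_half : cos (arcsin z / 2) = (√(1 - z) + √(1 + z)) / 2 := by
    rw [cos_half (by linarith [neg_pi_div_two_le_arcsin z, pi_pos])
      (by linarith [arcsin_le_pi_div_two z, pi_pos]), hcos,
      ← sqrt_sq (by positivity : 0 ≤ (√(1 - z) + √(1 + z)) / 2)]
    congr 1
    linear_combination (-1/4) * ha2 - (1/4) * hb2
  rw [hcos_half, hcos]
  field_simp
  ring

theorem cos_arcsin_half_div_cos_arcsin_pos {z : ℝ} (hz : |z| < 1) :
    0 < cos (arcsin z / 2) / cos (arcsin z) := by
  rw [← inv_sqrt_one_sub_add_inv_sqrt_one_add hz]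
  obtain ⟨hz₁, hz₂⟩ := abs_lt.mp hz
  have : 0 < √(1 - z) := sqrt_pos.mpr (by linarith)
  have : 0 < √(1 + z) := sqrt_pos.mpr (by linarith)
  positivity

theorem abs_mul_sin_lt_one {κ : ℝ} (hκ : |κ| < 1) (t : ℝ) : |κ * sin t| < 1 := by
  rw [abs_mul]
  exact (mul_le_of_le_one_right (abs_nonneg κ) (abs_sin_le_one t)).trans_lt hκ

theorem hasDerivAt_G {κ : ℝ} (hκ : |κ| < 1) (T : ℝ) :
    HasDerivAt (G κ) (cos (arcsin (κ * sin T) / 2) / cos (arcsin (κ * sin T))) T := by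
  have hcos : ∀ t, cos (arcsin (κ * sin t)) ≠ 0 := fun t => by
    rw [cos_arcsin, sqrt_ne_zero']
    nlinarith [sq_lt_one_iff_abs_lt_one _ |>.mpr (abs_mul_sin_lt_one hκ t)]
  have hG : G κ = fun T => ∫ t in (0 : ℝ)..T,
      cos (arcsin (κ * sin t) / 2) / cos (arcsin (κ * sin t)) := by
    ext T
    refine intervalIntegral.integral_congr fun t _ => ?_
    rw [← mul_pow, hyperF_quarter_threeQuarter_half_sq (abs_mul_sin_lt_one hκ t),
      inv_sqrt_one_sub_add_inv_sqrt_one_add (abs_mul_sin_lt_one hκ t)]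
  have hcont : Continuous fun t => cos (arcsin (κ * sin t) / 2) / cos (arcsin (κ * sin t)) := by
    fun_prop (disch := exact hcos _)
  rw [hG]
  exact (hcont.integral_hasStrictDerivAt 0 T).hasDerivAt

theorem hasDerivAt_of_inverse_of_deriv_pos {f g f' : ℝ → ℝ} (hf : ∀ x, HasDerivAt f (f' x) x)
    (hf' : ∀ x, 0 < f' x) (hl : Function.LeftInverse g f) (hr : Function.RightInverse g f)
    (y : ℝ) : HasDerivAt g (f' (g y))⁻¹ y := by
  have hmono : StrictMono f := strictMono_of_hasDerivAt_pos hf hf'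
  have hg : Monotone g := fun a b hab => hmono.le_iff_le.mp (by rwa [hr a, hr b])
  exact .of_local_left_inverse (hg.continuous_of_surjective hl.surjective).continuousAt
    (hf (g y)) (hf' _).ne' (Filter.Eventually.of_forall hr)

theorem stmt8 (κ : ℝ) (hκ₀ : 0 < κ) (hκ₁ : κ < 1)
    (φ : ℝ → ℝ) (hφ₁ : Function.LeftInverse φ (G κ))
    (hφ₂ : Function.RightInverse φ (G κ)) :
    Differentiable ℝ φ ∧
      ∀ u : ℝ, deriv φ u = Real.cos (psi κ φ u) / Real.cos (psi κ φ u / 2) := by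
  have hκ : |κ| < 1 := abs_lt.mpr ⟨by linarith, hκ₁⟩
  have hφ : ∀ u, HasDerivAt φ (cos (psi κ φ u) / cos (psi κ φ u / 2)) u := fun u => by
    simpa only [psi, inv_div] using hasDerivAt_of_inverse_of_deriv_pos (hasDerivAt_G hκ)
      (fun T => cos_arcsin_half_div_cos_arcsin_pos (abs_mul_sin_lt_one hκ T)) hφ₁ hφ₂ u
  exact ⟨fun u => (hφ u).differentiableAt, fun u => (hφ u).deriv⟩
end
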